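/- Let G have maximum degree Δ and let P* be an optimal (minimum-cost, shortcut-free) s–t secluded path. If u and v are two vertices on P* that share a common neighbor in G, then the distance between u and v along the path P* is at most Δ + 1. -/

import Mathlib

open Finset

/-- The closed neighborhood of a set `S` of vertices. -/
def nbhd {V : Type*} [Fintype V] [DecidableEq V] (G : SimpleGraph V) [DecidableRel G.Adj]
    (S : Finset V) : Finset V :=
  S ∪ univ.filter (fun v => ∃ u ∈ S, G.Adj u v)

/-- The exposure cost of a walk. -/
def wcost {V : Type*} [Fintype V] [DecidableEq V] (G : SimpleGraph V) [DecidableRel G.Adj]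
    {s t : V} (p : G.Walk s t) : ℕ :=
  (nbhd G p.support.toFinset).card

/-!
If the common neighbour `w` lies on the path, shortcut-freeness makes `u` and `v` both
path-neighbours of `w`, so they are at most two steps apart. Otherwise replace the segment of the
path between `u` and `v` by `u – w – v`. Compared with the closed neighbourhood of the kept
vertices, the new path exposes at most the `deg w - 2` neighbours of `w` other than `u` and `v`,
while the old one also exposes every vertex at least two steps inside the segment: by
shortcut-freeness such a vertex has no neighbour among the kept vertices. If `u` and `v` are `d`
steps apart, optimality therefore bounds the number `d - 3` of these vertices by `Δ - 2`.
-/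

namespace SimpleGraph

variable {V : Type*} {G : SimpleGraph V}

section Nbhd

variable [Fintype V] [DecidableEq V] [DecidableRel G.Adj]

lemma mem_nbhd {S : Finset V} {x : V} : x ∈ nbhd G S ↔ x ∈ S ∨ ∃ a ∈ S, G.Adj a x := by
  simp [nbhd]

lemma subset_nbhd (S : Finset V) : S ⊆ nbhd G S := subset_union_left

lemma nbhd_mono {S T : Finset V} (h : S ⊆ T) : nbhd G S ⊆ nbhd G T := by
  intro x
  simp only [mem_nbhd]
  exact Or.imp (@h x) fun ⟨a, ha, hax⟩ => ⟨a, h ha, hax⟩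

lemma card_nbhd_insert_add_two_le {S : Finset V} {u v w : V} (hu : u ∈ S) (hv : v ∈ S)
    (huv : u ≠ v) (huw : G.Adj u w) (hvw : G.Adj v w) :
    #(nbhd G (insert w S)) + 2 ≤ #(nbhd G S) + G.degree w := by
  have hsub : nbhd G (insert w S) ⊆ nbhd G S ∪ (G.neighborFinset w \ {u, v}) := by
    intro x hx
    simp only [mem_nbhd, mem_insert, mem_union, mem_sdiff, mem_neighborFinset,
      mem_singleton] at hx ⊢
    grind
  have hpair : {u, v} ⊆ G.neighborFinset w := by
    simp [insert_subset_iff, huw.symm, hvw.symm]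
  have hdeg := card_le_card hpair
  rw [card_pair huv, card_neighborFinset_eq_degree] at hdeg
  calc #(nbhd G (insert w S)) + 2
      ≤ #(nbhd G S) + #(G.neighborFinset w \ {u, v}) + 2 := by
        gcongr
        exact (card_le_card hsub).trans (card_union_le _ _)
    _ = #(nbhd G S) + G.degree w := by
        rw [card_sdiff_of_subset hpair, card_pair huv, card_neighborFinset_eq_degree]
        omega

end Nbhd

namespace Walk

variable {s t w : V} (p : G.Walk s t)

def IsShortcutFree : Prop :=
  ∀ u v : V, u ∈ p.support → v ∈ p.support → G.Adj u v → p.toSubgraph.Adj u v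

lemma mem_support_take_iff {i : ℕ} (hi : i ≤ p.length) {x : V} :
    x ∈ (p.take i).support ↔ ∃ k ≤ i, p.getVert k = x := by
  simp only [mem_support_iff_exists_getVert, take_getVert, take_length]
  constructor
  · rintro ⟨n, rfl, hn⟩
    exact ⟨min i n, min_le_left _ _, rfl⟩
  · rintro ⟨k, hk, rfl⟩
    exact ⟨k, by rw [min_eq_right hk], by omega⟩

lemma mem_support_drop_iff {j : ℕ} (hj : j ≤ p.length) {x : V} :
    x ∈ (p.drop j).support ↔ ∃ k, j ≤ k ∧ k ≤ p.length ∧ p.getVert k = x := by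
  simp only [mem_support_iff_exists_getVert, drop_getVert, drop_length]
  constructor
  · rintro ⟨n, rfl, hn⟩
    exact ⟨j + n, by omega, by omega, rfl⟩
  · rintro ⟨k, hjk, hk, rfl⟩
    exact ⟨k - j, by rw [Nat.add_sub_cancel' hjk], by omega⟩

variable {p}

lemma IsPath.toSubgraph_adj_getVert_iff (hp : p.IsPath) {m k : ℕ} (hm : m ≤ p.length)
    (hk : k ≤ p.length) :
    p.toSubgraph.Adj (p.getVert m) (p.getVert k) ↔ m + 1 = k ∨ k + 1 = m := by
  refine ⟨fun h => ?_, ?_⟩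
  · obtain ⟨l, he, hl⟩ := p.toSubgraph_adj_iff.1 h
    have hinj := hp.getVert_injOn
    rcases Sym2.eq_iff.1 he with ⟨h₁, h₂⟩ | ⟨h₁, h₂⟩
    · have := hinj (by simp; omega) hm h₁
      have := hinj (by simp; omega) hk h₂
      omega
    · have := hinj (by simp; omega) hk h₁
      have := hinj (by simp; omega) hm h₂
      omega
  · rintro (rfl | rfl)
    · exact p.toSubgraph_adj_getVert (by omega)
    · exact (p.toSubgraph_adj_getVert (by omega)).symm

lemma IsShortcutFree.adj_getVert_iff (hsf : p.IsShortcutFree) (hp : p.IsPath) {m k : ℕ}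
    (hm : m ≤ p.length) (hk : k ≤ p.length) :
    G.Adj (p.getVert m) (p.getVert k) ↔ m + 1 = k ∨ k + 1 = m := by
  rw [← hp.toSubgraph_adj_getVert_iff hm hk]
  exact ⟨hsf _ _ (p.getVert_mem_support m) (p.getVert_mem_support k), Subgraph.Adj.adj_sub⟩

variable (p) in
def detour (i j : ℕ) (h₁ : G.Adj (p.getVert i) w) (h₂ : G.Adj w (p.getVert j)) : G.Walk s t :=
  (p.take i).append (cons h₁ (cons h₂ (p.drop j)))

section Detour

variable {i j : ℕ} {h₁ : G.Adj (p.getVert i) w} {h₂ : G.Adj w (p.getVert j)}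

lemma support_detour :
    (p.detour i j h₁ h₂).support = (p.take i).support ++ w :: (p.drop j).support := by
  simp [detour, support_append]

lemma IsPath.detour (hp : p.IsPath) (hij : i < j) (hj : j ≤ p.length) (hw : w ∉ p.support) :
    (p.detour i j h₁ h₂).IsPath := by
  rw [isPath_def, support_detour, List.nodup_append, List.nodup_cons]
  refine ⟨(hp.take i).support_nodup, ⟨fun hwd => hw ?_, (hp.drop j).support_nodup⟩, ?_⟩
  · obtain ⟨k, -, -, rfl⟩ := (p.mem_support_drop_iff hj).1 hwd
    exact p.getVert_mem_support k
  · rintro x hx y hy rfl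
    obtain ⟨k, hki, rfl⟩ := (p.mem_support_take_iff (by omega)).1 hx
    rcases List.mem_cons.1 hy with hkw | hy
    · exact hw (hkw ▸ p.getVert_mem_support k)
    · obtain ⟨m, hjm, hm, hmk⟩ := (p.mem_support_drop_iff hj).1 hy
      have := hp.getVert_injOn hm (show k ≤ p.length by omega) hmk
      omega

lemma support_toFinset_detour [DecidableEq V] (hij : i ≤ j) (hj : j ≤ p.length) :
    (p.detour i j h₁ h₂).support.toFinset =
      insert w ((range (i + 1) ∪ Icc j p.length).image p.getVert) := by
  ext x
  simp only [List.mem_toFinset, support_detour, List.mem_append, List.mem_cons,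
    p.mem_support_take_iff (hij.trans hj), p.mem_support_drop_iff hj, mem_insert, mem_image,
    mem_union, mem_range, mem_Icc]
  grind

end Detour

section Cost

variable [Fintype V] [DecidableEq V] [DecidableRel G.Adj]

lemma IsShortcutFree.disjoint_nbhd_image_getVert (hsf : p.IsShortcutFree) (hp : p.IsPath)
    {I J : Finset ℕ} (hI : ∀ m ∈ I, m ≤ p.length) (hJ : ∀ k ∈ J, k ≤ p.length)
    (hIJ : ∀ m ∈ I, ∀ k ∈ J, m + 2 ≤ k ∨ k + 2 ≤ m) :
    Disjoint (nbhd G (I.image p.getVert)) (J.image p.getVert) := by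
  rw [disjoint_right]
  rintro _ hx hxN
  obtain ⟨k, hkJ, rfl⟩ := mem_image.1 hx
  rcases mem_nbhd.1 hxN with hkI | ⟨_, ha, hadj⟩
  · obtain ⟨m, hmI, hmk⟩ := mem_image.1 hkI
    have := hp.getVert_injOn (hI m hmI) (hJ k hkJ) hmk
    have := hIJ m hmI k hkJ
    omega
  · obtain ⟨m, hmI, rfl⟩ := mem_image.1 ha
    have := (hsf.adj_getVert_iff hp (hI m hmI) (hJ k hkJ)).1 hadj
    have := hIJ m hmI k hkJ
    omega

lemma IsShortcutFree.card_nbhd_add_card_le_wcost (hsf : p.IsShortcutFree) (hp : p.IsPath)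
    {I J : Finset ℕ} (hI : ∀ m ∈ I, m ≤ p.length) (hJ : ∀ k ∈ J, k ≤ p.length)
    (hIJ : ∀ m ∈ I, ∀ k ∈ J, m + 2 ≤ k ∨ k + 2 ≤ m) :
    #(nbhd G (I.image p.getVert)) + #J ≤ wcost G p := by
  have himage (K : Finset ℕ) : K.image p.getVert ⊆ p.support.toFinset := by
    rintro _ hx
    obtain ⟨k, -, rfl⟩ := mem_image.1 hx
    exact List.mem_toFinset.2 (p.getVert_mem_support k)
  rw [← card_image_of_injOn (hp.getVert_injOn.mono hJ),
    ← card_union_of_disjoint (hsf.disjoint_nbhd_image_getVert hp hI hJ hIJ)]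
  exact card_le_card (union_subset (nbhd_mono (himage I)) ((himage J).trans (subset_nbhd _)))

lemma IsPath.wcost_detour_add_two_le (hp : p.IsPath) {i j : ℕ} (hij : i < j)
    (hj : j ≤ p.length) (h₁ : G.Adj (p.getVert i) w) (h₂ : G.Adj w (p.getVert j)) :
    wcost G (p.detour i j h₁ h₂) + 2 ≤
      #(nbhd G ((range (i + 1) ∪ Icc j p.length).image p.getVert)) + G.degree w := by
  rw [wcost, support_toFinset_detour hij.le hj]
  refine card_nbhd_insert_add_two_le (mem_image_of_mem _ (by simp))
    (mem_image_of_mem _ (by simp [hj])) (fun h => ?_) h₁ h₂.symm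
  have := hp.getVert_injOn (show i ≤ p.length by omega) hj h
  omega

theorem IsShortcutFree.le_add_maxDegree_add_one (hsf : p.IsShortcutFree) (hp : p.IsPath)
    (hopt : ∀ q : G.Walk s t, q.IsPath → wcost G p ≤ wcost G q) {i j : ℕ} (hij : i ≤ j)
    (hj : j ≤ p.length) (h₁ : G.Adj (p.getVert i) w) (h₂ : G.Adj (p.getVert j) w) :
    j ≤ i + G.maxDegree + 1 := by
  have hΔ : 1 ≤ G.maxDegree :=
    ((G.degree_pos_iff_exists_adj _).2 ⟨w, h₁⟩).trans_le (G.degree_le_maxDegree _)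
  by_cases hw : w ∈ p.support
  · obtain ⟨k, rfl, hk⟩ := mem_support_iff_exists_getVert.1 hw
    have := (hsf.adj_getVert_iff hp (hij.trans hj) hk).1 h₁
    have := (hsf.adj_getVert_iff hp hj hk).1 h₂
    omega
  by_cases hclose : j ≤ i + 2
  · omega
  have hbetter := hopt _ (hp.detour (h₁ := h₁) (h₂ := h₂.symm) (by omega) hj hw)
  have hup := hp.wcost_detour_add_two_le (by omega) hj h₁ h₂.symm
  have hlow := hsf.card_nbhd_add_card_le_wcost hp (I := range (i + 1) ∪ Icc j p.length)
    (J := Icc (i + 2) (j - 2))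
    (by simp; omega) (by simp; omega) (by simp; omega)
  have := G.degree_le_maxDegree w
  rw [Nat.card_Icc] at hlow
  omega

end Cost

end Walk

end SimpleGraph

theorem common_neighbor_close_on_optimal_path {V : Type*} [Fintype V] [DecidableEq V]
    (G : SimpleGraph V) [DecidableRel G.Adj]
    {s t : V} (p : G.Walk s t) (hp : p.IsPath)
    (hopt : ∀ q : G.Walk s t, q.IsPath → wcost G p ≤ wcost G q)
    (hshortcutfree : ∀ u v : V, u ∈ p.support → v ∈ p.support → G.Adj u v →
      p.toSubgraph.Adj u v)
    {u v w : V} (hu : u ∈ p.support) (hv : v ∈ p.support)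
    (hw1 : G.Adj u w) (hw2 : G.Adj v w) :
    ((p.support.idxOf u : ℤ) - (p.support.idxOf v : ℤ)).natAbs ≤ G.maxDegree + 1 := by
  have hsf : p.IsShortcutFree := hshortcutfree
  have close {a b : V} (ha : a ∈ p.support) (hb : b ∈ p.support) (haw : G.Adj a w)
      (hbw : G.Adj b w) (hab : p.support.idxOf a ≤ p.support.idxOf b) :
      p.support.idxOf b ≤ p.support.idxOf a + G.maxDegree + 1 := by
    have hb_le : p.support.idxOf b < p.length + 1 :=
      p.length_support ▸ List.idxOf_lt_length_of_mem hb
    refine hsf.le_add_maxDegree_add_one hp hopt hab (w := w) (by omega) ?_ ?_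
    · rwa [p.getVert_support_idxOf ha]
    · rwa [p.getVert_support_idxOf hb]
  rcases le_total (p.support.idxOf u) (p.support.idxOf v) with h | h
  · have := close hu hv hw1 hw2 h
    omega
  · have := close hv hu hw2 hw1 h
    omega
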